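/- A hermitian functional u with Carathéodory series F lies in the class Rat (∃ L ∈ Λ₀, N ∈ Λ with F·L = N) if and only if there exists (L, M) ∈ Λ₀ × Λ with u·L = leb·M, where leb is the functional of the normalized Lebesgue measure on the unit circle (leb[zⁿ] = δ_{n,0}). -/

import Mathlib

open LaurentPolynomial Complex Polynomial

noncomputable section

abbrev LP := LaurentPolynomial ℂ
abbrev Func := LP →ₗ[ℂ] ℂ

/-- The coefficients of a Laurent polynomial, as a finitely supported function on `ℤ`. -/
def coeF (L : LP) : ℤ →₀ ℂ := L.coeff

/-- The modified functional `u·L`, defined by `(u·L)[f] = u[L·f]`. -/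
def smulF (u : Func) (L : LP) : Func := u ∘ₗ LinearMap.mulLeft ℂ L

/-- The moments `μ_n = u[zⁿ]`. -/
def moment (u : Func) (n : ℤ) : ℂ := u (T n)

/-- A functional is hermitian if `μ_{-n} = conj μ_n`. -/
def IsHermitian (u : Func) : Prop := ∀ n : ℤ, moment u (-n) = (starRingEnd ℂ) (moment u n)

/-- The Carathéodory formal series `F(z) = μ₀ + 2 Σ_{n≥1} μ_{-n} zⁿ`, as coefficients. -/
def CS (u : Func) : ℤ → ℂ := fun n => if n = 0 then moment u 0 else if 0 < n then 2 * moment u (-n) else 0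

/-- The Laurent formal series `L[u](z) = Σ_{n∈ℤ} μ_{-n} zⁿ`, as coefficients. -/
def LS (u : Func) : ℤ → ℂ := fun n => moment u (-n)

/-- `H_*(z) = conj (H (1/conj z))`, coefficient-wise. -/
def starS (H : ℤ → ℂ) : ℤ → ℂ := fun n => (starRingEnd ℂ) (H (-n))

/-- Product of a formal doubly-infinite series with a Laurent polynomial. -/
def mulS (H : ℤ → ℂ) (L : LP) : ℤ → ℂ := fun n => (coeF L).sum fun k c => c * H (n - k)

/-- The `*` operation on Laurent polynomials: `L_*(z) = conj (L (1/conj z))`. -/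
def starLP (L : LP) : LP :=
  AddMonoidAlgebra.ofCoeff (Finsupp.equivMapDomain (Equiv.neg ℤ)
    (Finsupp.mapRange (starRingEnd ℂ) (map_zero _) (coeF L)) : ℤ →₀ ℂ)

/-- A Laurent polynomial as a formal series. -/
def polyS (N : LP) : ℤ → ℂ := fun n => coeF N n

/-- The Lebesgue functional `leb[zⁿ] = δ_{n,0}`. -/
def lebF : Func := (Finsupp.lapply (0 : ℤ) : (ℤ →₀ ℂ) →ₗ[ℂ] ℂ) ∘ₗ
  (AddMonoidAlgebra.coeffLinearEquiv ℂ : LP ≃ₗ[ℂ] (ℤ →₀ ℂ)).toLinearMap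

/-- The Dirac delta at `z = 1`: evaluation at `1`. -/
def delta1 : Func := (Finsupp.lsum ℂ (fun _ : ℤ => (LinearMap.id : ℂ →ₗ[ℂ] ℂ)) : (ℤ →₀ ℂ) →ₗ[ℂ] ℂ) ∘ₗ
  (AddMonoidAlgebra.coeffLinearEquiv ℂ : LP ≃ₗ[ℂ] (ℤ →₀ ℂ)).toLinearMap

/-- `P* (z) = z^q conj(P(1/conj z))` with `q` given: conjugate coefficients and reflect at `q`. -/
def starDeg (q : ℕ) (P : Polynomial ℂ) : Polynomial ℂ := Polynomial.reflect q (P.map (starRingEnd ℂ))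

/-- The class `Δ` of hermitian functionals annihilated by a nonzero Laurent polynomial. -/
def InDelta (u : Func) : Prop := IsHermitian u ∧ ∃ N : LP, N ≠ 0 ∧ smulF u N = 0

/-!
For hermitian `u` the Carathéodory series satisfies `F + F_* = 2 L[u]`, where
`L[u] = Σ μ_{-n} zⁿ` is the Laurent series of `u`, and `u·L = leb·M` says exactly `L[u]·L = M`.
Multiplying by the self-adjoint `L·L_*` thus links the two conditions: `F·L = N` gives
`L[u]·(L L_*) = (N L_* + (N L_*)_*)/2`. Conversely, if `L[u]·L = M`, then `G = F·(L L_*)`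
satisfies `G + G_* = 2 M L_*`; since `F` has no negative powers, `G` vanishes in low degrees,
hence `G_*` vanishes in high degrees, and `G` is a Laurent polynomial.
-/

open AddMonoidAlgebra

lemma coeF_injective : Function.Injective coeF := fun _ _ h => AddMonoidAlgebra.ext h

lemma coeF_zero : coeF 0 = 0 := rfl

lemma coeF_add (A B : LP) : coeF (A + B) = coeF A + coeF B := rfl

lemma coeF_single (b : ℤ) (c : ℂ) : coeF (single b c) = Finsupp.single b c := rfl

lemma coeF_mul_single (A : LP) (b : ℤ) (c : ℂ) (n : ℤ) :
    coeF (A * single b c) n = coeF A (n - b) * c :=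
  coeff_mul_single_apply A c b n

section Star

lemma coeF_starLP (L : LP) (n : ℤ) : coeF (starLP L) n = starRingEnd ℂ (coeF L (-n)) := rfl

lemma starLP_zero : starLP 0 = 0 :=
  coeF_injective <| by ext n; rw [coeF_starLP, coeF_zero]; simp

lemma starLP_add (A B : LP) : starLP (A + B) = starLP A + starLP B :=
  coeF_injective <| by ext n; simp only [coeF_starLP, coeF_add, Finsupp.add_apply, map_add]

lemma starLP_single (b : ℤ) (c : ℂ) : starLP (single b c) = single (-b) (starRingEnd ℂ c) :=
  coeF_injective <| by
    ext n
    rw [coeF_starLP, coeF_single, coeF_single, Finsupp.single_apply, Finsupp.single_apply]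
    simp only [neg_eq_iff_eq_neg]
    split_ifs <;> simp

lemma starLP_starLP (L : LP) : starLP (starLP L) = L :=
  coeF_injective <| by ext n; simp [coeF_starLP]

lemma starLP_ne_zero {L : LP} (hL : L ≠ 0) : starLP L ≠ 0 := fun h =>
  hL <| by rw [← starLP_starLP L, h, starLP_zero]

lemma starLP_mul (A B : LP) : starLP (A * B) = starLP A * starLP B := by
  induction B using AddMonoidAlgebra.induction_linear with
  | zero => rw [mul_zero, starLP_zero, mul_zero]
  | add f g hf hg => rw [mul_add, starLP_add, hf, hg, starLP_add, mul_add]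
  | single b c =>
    refine coeF_injective (Finsupp.ext fun n => ?_)
    rw [starLP_single, coeF_mul_single, coeF_starLP, coeF_starLP, coeF_mul_single, map_mul,
      sub_neg_eq_add, neg_add']

lemma mul_starLP_self_ne_zero {L : LP} (hL : L ≠ 0) : L * starLP L ≠ 0 :=
  mul_ne_zero hL (starLP_ne_zero hL)

lemma starLP_mul_starLP_self (L : LP) : starLP (L * starLP L) = L * starLP L := by
  rw [starLP_mul, starLP_starLP, mul_comm]

end Star

section SeriesAction

lemma polyS_add (A B : LP) : polyS (A + B) = polyS A + polyS B := rfl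

lemma polyS_smul (c : ℂ) (A : LP) : polyS (c • A) = c • polyS A := rfl

lemma polyS_starLP (N : LP) : polyS (starLP N) = starS (polyS N) := rfl

lemma mulS_zero (H : ℤ → ℂ) : mulS H 0 = 0 := by
  funext n; simp [mulS, coeF_zero]

lemma mulS_add (H : ℤ → ℂ) (A B : LP) : mulS H (A + B) = mulS H A + mulS H B := by
  funext n
  simp only [mulS, coeF_add, Pi.add_apply]
  rw [Finsupp.sum_add_index] <;> simp [add_mul]

lemma mulS_single (H : ℤ → ℂ) (b : ℤ) (c : ℂ) : mulS H (single b c) = fun n => c * H (n - b) := by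
  funext n
  rw [mulS, coeF_single, Finsupp.sum_single_index (zero_mul _)]

lemma add_mulS (H₁ H₂ : ℤ → ℂ) (A : LP) : mulS (H₁ + H₂) A = mulS H₁ A + mulS H₂ A := by
  funext n
  simp only [mulS, Pi.add_apply, ← Finsupp.sum_add, mul_add]

lemma smul_mulS (c : ℂ) (H : ℤ → ℂ) (A : LP) : mulS (c • H) A = c • mulS H A := by
  funext n
  simp only [mulS, Pi.smul_apply, smul_eq_mul, Finsupp.mul_sum, mul_left_comm]

lemma mulS_mul (H : ℤ → ℂ) (A B : LP) : mulS H (A * B) = mulS (mulS H A) B := by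
  induction B using AddMonoidAlgebra.induction_linear with
  | zero => rw [mul_zero, mulS_zero, mulS_zero]
  | add f g hf hg => rw [mul_add, mulS_add, mulS_add, hf, hg]
  | single b c =>
    induction A using AddMonoidAlgebra.induction_linear with
    | zero => rw [zero_mul, mulS_zero, mulS_single]; funext n; simp
    | add f g hf hg => rw [add_mul, mulS_add, mulS_add, hf, hg, add_mulS]
    | single a r =>
      rw [single_mul_single, mulS_single, mulS_single, mulS_single]
      funext n
      simp only [sub_sub, add_comm b a]
      ring

lemma mulS_polyS (A B : LP) : mulS (polyS A) B = polyS (A * B) := by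
  induction B using AddMonoidAlgebra.induction_linear with
  | zero => rw [mul_zero, mulS_zero]; rfl
  | add f g hf hg => rw [mul_add, mulS_add, hf, hg]; rfl
  | single b c =>
    rw [mulS_single]
    funext n
    rw [polyS, polyS, coeF_mul_single, mul_comm]

lemma mulS_starS (H : ℤ → ℂ) (A : LP) : mulS (starS H) (starLP A) = starS (mulS H A) := by
  induction A using AddMonoidAlgebra.induction_linear with
  | zero => rw [starLP_zero, mulS_zero, mulS_zero]; funext n; simp [starS]
  | add f g hf hg =>
    rw [starLP_add, mulS_add, mulS_add, hf, hg]; funext n; simp [starS]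
  | single b c =>
    rw [starLP_single, mulS_single, mulS_single]
    funext n
    simp only [starS, map_mul, sub_neg_eq_add, neg_add']

end SeriesAction

section Functionals

lemma func_ext_T {f g : Func} (h : ∀ n, f (T n) = g (T n)) : f = g :=
  lhom_ext' fun n => LinearMap.ext fun c => by
    have hc : (single n c : LP) = c • T n := by rw [T, smul_single', mul_one]
    simp only [LinearMap.coe_comp, Function.comp_apply, lsingle_apply, hc, map_smul, h]

lemma smulF_apply_T (u : Func) (L : LP) (n : ℤ) : smulF u L (T n) = mulS (LS u) L (-n) := by
  induction L using AddMonoidAlgebra.induction_linear with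
  | zero => simp [smulF, mulS_zero]
  | add f g hf hg =>
    simp only [smulF, LinearMap.coe_comp, Function.comp_apply, LinearMap.mulLeft_apply] at hf hg ⊢
    rw [add_mul, map_add, hf, hg, mulS_add, Pi.add_apply]
  | single k c =>
    have hk : (single k c * T n : LP) = c • T (k + n) := by
      rw [T, T, single_mul_single, smul_single', mul_one]
    simp only [smulF, LinearMap.coe_comp, Function.comp_apply, LinearMap.mulLeft_apply, hk,
      map_smul, smul_eq_mul, mulS_single, LS, moment]
    ring_nf

lemma smulF_lebF_apply_T (M : LP) (n : ℤ) : smulF lebF M (T n) = polyS M (-n) := by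
  change coeF (M * single n 1) 0 = coeF M (-n)
  rw [coeF_mul_single, mul_one, zero_sub]

lemma smulF_eq_smulF_lebF_iff (u : Func) (L M : LP) :
    smulF u L = smulF lebF M ↔ mulS (LS u) L = polyS M := by
  refine ⟨fun h => funext fun n => ?_, fun h => func_ext_T fun n => ?_⟩
  · have hn := congrArg (· (T (-n))) h
    rwa [smulF_apply_T, smulF_lebF_apply_T, neg_neg] at hn
  · rw [smulF_apply_T, smulF_lebF_apply_T, h]

lemma CS_eq_zero_of_neg (u : Func) {n : ℤ} (hn : n < 0) : CS u n = 0 := by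
  simp [CS, hn.ne, hn.not_gt]

lemma CS_add_starS_CS {u : Func} (hu : IsHermitian u) : CS u + starS (CS u) = (2 : ℂ) • LS u := by
  funext n
  simp only [Pi.add_apply, Pi.smul_apply, smul_eq_mul, CS, starS, LS]
  rcases lt_trichotomy n 0 with hn | rfl | hn
  · simp [hn, hn.ne, hn.not_gt, ← hu n, Complex.conj_ofNat]
  · simp [← hu 0]
    ring
  · simp [hn, hn.ne', hn.not_gt]

lemma two_smul_mulS_LS {u : Func} (hu : IsHermitian u) {L : LP} (hL : starLP L = L) :
    (2 : ℂ) • mulS (LS u) L = mulS (CS u) L + starS (mulS (CS u) L) := by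
  conv_rhs => rw [← mulS_starS, hL]
  rw [← add_mulS, CS_add_starS_CS hu, smul_mulS]

end Functionals

section Finiteness

lemma exists_mulS_eq_zero_of_lt {H : ℤ → ℂ} (hH : ∀ n < 0, H n = 0) (L : LP) :
    ∃ b, ∀ n < b, mulS H L n = 0 := by
  obtain ⟨b, hb⟩ := (coeF L).support.bddBelow
  refine ⟨b, fun n hn => Finset.sum_eq_zero fun k hk => ?_⟩
  dsimp only
  rw [hH (n - k) (by linarith [hb hk]), mul_zero]

lemma exists_polyS_eq_of_add_starS_eq {H : ℤ → ℂ} {Q : LP} {b : ℤ} (hH : ∀ n < b, H n = 0)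
    (hQ : H + starS H = polyS Q) : ∃ N, H = polyS N := by
  -- `H_*` vanishes above `-b`, so there `H` agrees with the Laurent polynomial `Q`.
  have hsupp : Function.support H ⊆ ↑(coeF Q).support ∪ Set.Icc b (-b) := by
    intro n hn
    by_contra hout
    simp only [Set.mem_union, Finset.mem_coe, Finsupp.mem_support_iff, not_or, not_not,
      Set.mem_Icc, not_and_or, not_le] at hout
    obtain ⟨hQn, hlt | hgt⟩ := hout
    · exact hn (hH n hlt)
    · have := congrFun hQ n
      simp only [Pi.add_apply, starS, hH (-n) (by omega), map_zero, add_zero, polyS] at this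
      exact hn (this.trans hQn)
  refine ⟨ofCoeff (Finsupp.ofSupportFinite H ?_), rfl⟩
  exact ((coeF Q).support.finite_toSet.union (Set.finite_Icc b (-b))).subset hsupp

end Finiteness

/-- a hermitian `u` lies in `Rat` (its Carathéodory series satisfies
`F·L = N` for some `L ∈ Λ₀`, `N ∈ Λ`) iff `u·L = leb·M` for some `(L,M) ∈ Λ₀ × Λ`. -/
theorem stmt12 (u : Func) (hu : IsHermitian u) :
    (∃ (L N : LP), L ≠ 0 ∧ mulS (CS u) L = polyS N) ↔
    (∃ (L M : LP), L ≠ 0 ∧ smulF u L = smulF lebF M) := by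
  simp only [smulF_eq_smulF_lebF_iff]
  constructor
  · rintro ⟨L, N, hL, hN⟩
    have h2 := two_smul_mulS_LS hu (starLP_mul_starLP_self L)
    rw [mulS_mul (CS u), hN, mulS_polyS, ← polyS_starLP, ← polyS_add] at h2
    refine ⟨L * starLP L, (2⁻¹ : ℂ) • (N * starLP L + starLP (N * starLP L)),
      mul_starLP_self_ne_zero hL, ?_⟩
    rw [polyS_smul, ← h2, smul_smul, inv_mul_cancel₀ two_ne_zero, one_smul]
  · rintro ⟨L, M, hL, hM⟩
    have h2 := two_smul_mulS_LS hu (starLP_mul_starLP_self L)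
    rw [mulS_mul (LS u), hM, mulS_polyS, ← polyS_smul] at h2
    obtain ⟨b, hb⟩ := exists_mulS_eq_zero_of_lt (fun n => CS_eq_zero_of_neg u) (L * starLP L)
    obtain ⟨N, hN⟩ := exists_polyS_eq_of_add_starS_eq hb h2.symm
    exact ⟨_, N, mul_starLP_self_ne_zero hL, hN⟩
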